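/- Let p ≥ 2, k ≥ 1, n ≥ 1, G > 0, μ > 0. Assume ℓ is differentiable in its first argument with ‖∇ℓ(w̃;ξ)‖ ≤ G for every ξ ∈ X, and that F_S is μ-restricted strongly convex at level 2k with probability at least 1 − δ'_n. Let w̃ ∈ W have exactly k nonzero coordinates, write w̃_min = min_{i ∈ supp(w̃)} |w̃_i| and g = E_{ξ∼D}[∇ℓ(w̃;ξ)], and let w_{S,k} be an ℓ0-ERM estimator at sparsity level k. If for some δ ∈ (0, 1 − δ'_n) the strong-signal condition w̃_min > (2√(2k)/μ)·(‖g‖_∞ + G√(2 log(2p/δ)/n)) holds, then with probability at least 1 − δ − δ'_n, supp(w_{S,k}) = supp(w̃). -/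

import Mathlib

open MeasureTheory Set

noncomputable section

abbrev Vec (p : ℕ) := EuclideanSpace ℝ (Fin p)

def spt {p : ℕ} (w : Vec p) : Set (Fin p) := {i | w i ≠ 0}

/-- coordinate-wise maximum norm -/
def linf {p : ℕ} (w : Vec p) : ℝ := ⨆ i, |w i|

/-- smallest magnitude of the nonzero entries -/
def wmin {p : ℕ} (w : Vec p) : ℝ := ⨅ i : spt w, |w (i : Fin p)|

/-- μ-restricted strong convexity at sparsity level s -/
def RSC {p : ℕ} (μ : ℝ) (s : ℕ) (f : Vec p → ℝ) : Prop :=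
  ∀ w w' : Vec p, (spt (w - w')).ncard ≤ s →
    μ / 2 * ‖w - w'‖ ^ 2 ≤ f w - f w' - (inner ℝ (gradient f w') (w - w') : ℝ)

/-- empirical risk -/
def emp {p : ℕ} {X : Type*} (loss : Vec p → X → ℝ) {n : ℕ} (T : Fin n → X)
    (w : Vec p) : ℝ := (n : ℝ)⁻¹ * ∑ i, loss w (T i)

section Aux

open Real

lemma hoef_core {q : ℝ} (hq0 : 0 ≤ q) (hq1 : q ≤ 1) (u : ℝ) :
    (1 - q) * exp (-q * u) + q * exp ((1 - q) * u) ≤ exp (u ^ 2 / 8) := by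
  have hD : ∀ v : ℝ, 0 < 1 - q + q * exp v := by
    intro v
    rcases eq_or_lt_of_le hq0 with h | h
    · simp [← h]
    · have : 0 < q * exp v := mul_pos h (exp_pos v)
      linarith
  set f : ℝ → ℝ := fun v => log (1 - q + q * exp v) - q * v - v ^ 2 / 8 with hfdef
  set f' : ℝ → ℝ := fun v => q * exp v / (1 - q + q * exp v) - q - v / 4 with hf'def
  have hDer : ∀ v : ℝ, HasDerivAt (fun w => 1 - q + q * exp w) (q * exp v) v := fun v =>
    ((Real.hasDerivAt_exp v).const_mul q).const_add (1 - q)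
  have hf : ∀ v, HasDerivAt f (f' v) v := by
    intro v
    have h1 : HasDerivAt (fun w => log (1 - q + q * exp w))
        (q * exp v / (1 - q + q * exp v)) v := (hDer v).log (hD v).ne'
    have h2 : HasDerivAt (fun w : ℝ => q * w) q v := by
      simpa using (hasDerivAt_id v).const_mul q
    have h3 : HasDerivAt (fun w : ℝ => w ^ 2 / 8) (v / 4) v := by
      have := (hasDerivAt_pow 2 v).div_const 8
      refine this.congr_deriv ?_
      norm_num
      ring
    exact (h1.sub h2).sub h3
  have hf' : ∀ v, HasDerivAt f'
      (q * exp v / (1 - q + q * exp v) - (q * exp v / (1 - q + q * exp v)) ^ 2 - 1 / 4) v := by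
    intro v
    have h1 : HasDerivAt (fun w => q * exp w / (1 - q + q * exp w))
        ((q * exp v * (1 - q + q * exp v) - q * exp v * (q * exp v)) / (1 - q + q * exp v) ^ 2) v :=
      ((Real.hasDerivAt_exp v).const_mul q).div (hDer v) (hD v).ne'
    have h2 : HasDerivAt (fun w : ℝ => q + w / 4) (1 / 4) v := by
      simpa using ((hasDerivAt_id v).div_const 4).const_add q
    have h3 := h1.sub h2
    have heq : (q * exp v * (1 - q + q * exp v) - q * exp v * (q * exp v)) / (1 - q + q * exp v) ^ 2
        = q * exp v / (1 - q + q * exp v) - (q * exp v / (1 - q + q * exp v)) ^ 2 := by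
      have hd := (hD v).ne'
      field_simp
    rw [heq] at h3
    have : f' = fun w => q * exp w / (1 - q + q * exp w) - (q + w / 4) := by
      funext w; simp [hf'def]; ring
    rw [this]
    exact h3
  have hf'nonpos : ∀ v, q * exp v / (1 - q + q * exp v)
      - (q * exp v / (1 - q + q * exp v)) ^ 2 - 1 / 4 ≤ 0 := by
    intro v
    nlinarith [sq_nonneg (q * exp v / (1 - q + q * exp v) - 1 / 2)]
  have hf'0 : f' 0 = 0 := by simp [hf'def]
  have hanti : Antitone f' :=
    antitone_of_deriv_nonpos (fun v => (hf' v).differentiableAt)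
      (fun v => by rw [(hf' v).deriv]; exact hf'nonpos v)
  have hf0 : f 0 = 0 := by simp [hfdef]
  have hcont : Continuous f := by
    have : Differentiable ℝ f := fun v => (hf v).differentiableAt
    exact this.continuous
  have key : f u ≤ 0 := by
    rcases le_or_gt 0 u with h | h
    · have hA : AntitoneOn f (Set.Ici 0) := by
        apply antitoneOn_of_deriv_nonpos (convex_Ici 0) hcont.continuousOn
          (fun v _ => (hf v).differentiableAt.differentiableWithinAt)
        intro v hv
        rw [(hf v).deriv]
        rw [interior_Ici] at hv
        have := hanti (le_of_lt hv)
        linarith [hf'0 ▸ this]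
      have := hA Set.self_mem_Ici (Set.mem_Ici.mpr h) h
      linarith [hf0 ▸ this]
    · have hM : MonotoneOn f (Set.Iic 0) := by
        apply monotoneOn_of_deriv_nonneg (convex_Iic 0) hcont.continuousOn
          (fun v _ => (hf v).differentiableAt.differentiableWithinAt)
        intro v hv
        rw [(hf v).deriv]
        rw [interior_Iic] at hv
        have := hanti (le_of_lt hv)
        linarith [hf'0 ▸ this]
      have := hM (Set.mem_Iic.mpr h.le) Set.self_mem_Iic h.le
      linarith [hf0 ▸ this]
  have expand : (1 - q) * exp (-q * u) + q * exp ((1 - q) * u)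
      = exp (log (1 - q + q * exp u) - q * u) := by
    rw [exp_sub, exp_log (hD u), show (1 - q) * u = u - q * u by ring, exp_sub]
    simp only [neg_mul, exp_neg, div_eq_mul_inv]
    ring
  rw [expand]
  apply exp_le_exp.mpr
  have : f u = log (1 - q + q * exp u) - q * u - u ^ 2 / 8 := rfl
  linarith [this ▸ key]

lemma hoef_lemma {Y : Type*} [MeasurableSpace Y] (ν : Measure Y) [IsProbabilityMeasure ν]
    {f : Y → ℝ} (hm : Measurable f) {a b : ℝ} (hab : ∀ x, f x ∈ Set.Icc a b)
    (hmean : ∫ x, f x ∂ν = 0) (t : ℝ) :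
    ∫ x, exp (t * f x) ∂ν ≤ exp (t ^ 2 * (b - a) ^ 2 / 8) := by
  have hintf : Integrable f ν := by
    refine (integrable_const (max |a| |b|)).mono' hm.aestronglyMeasurable ?_
    filter_upwards with x
    rw [norm_eq_abs, abs_le]
    constructor
    · have := (hab x).1
      have : -(max |a| |b|) ≤ a := by
        have := neg_abs_le a
        have := le_max_left |a| |b|
        linarith
      linarith [(hab x).1]
    · have : b ≤ max |a| |b| := le_trans (le_abs_self b) (le_max_right |a| |b|)
      linarith [(hab x).2]
  have ha0 : a ≤ 0 := by
    have : ∫ _ : Y, a ∂ν ≤ ∫ x, f x ∂ν :=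
      integral_mono (integrable_const a) hintf (fun x => (hab x).1)
    simpa [hmean] using this
  have hb0 : 0 ≤ b := by
    have : ∫ x, f x ∂ν ≤ ∫ _ : Y, b ∂ν :=
      integral_mono hintf (integrable_const b) (fun x => (hab x).2)
    simpa [hmean] using this
  rcases eq_or_lt_of_le (ha0.trans hb0) with hab' | hab'
  · have ha : a = 0 := le_antisymm ha0 (hab'.symm ▸ hb0 : 0 ≤ a)
    have hb : b = 0 := hab' ▸ ha
    have hf0 : ∀ x, f x = 0 := fun x =>
      le_antisymm (hb ▸ (hab x).2) (ha ▸ (hab x).1)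
    simp only [hf0, mul_zero, exp_zero, integral_const, measure_univ, probReal_univ, ENNReal.toReal_one,
      smul_eq_mul, one_mul]
    exact one_le_exp (by positivity)
  · have hba : 0 < b - a := sub_pos.mpr hab'
    have hintexp : Integrable (fun x => exp (t * f x)) ν := by
      refine (integrable_const (exp (|t| * max |a| |b|))).mono'
        ((hm.const_mul t).exp.aestronglyMeasurable) ?_
      filter_upwards with x
      rw [norm_eq_abs, abs_exp]
      apply exp_le_exp.mpr
      calc t * f x ≤ |t * f x| := le_abs_self _
        _ = |t| * |f x| := abs_mul t (f x)
        _ ≤ |t| * max |a| |b| := by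
            apply mul_le_mul_of_nonneg_left _ (abs_nonneg t)
            rw [abs_le]
            refine ⟨?_, ?_⟩
            · have : -(max |a| |b|) ≤ a := by
                have h1 := neg_abs_le a
                have h2 := le_max_left |a| |b|
                linarith
              linarith [(hab x).1]
            · have : b ≤ max |a| |b| := le_trans (le_abs_self b) (le_max_right |a| |b|)
              linarith [(hab x).2]
    have hpt : ∀ x, exp (t * f x)
        ≤ (b - f x) / (b - a) * exp (t * a) + (f x - a) / (b - a) * exp (t * b) := by
      intro x
      have hw1 : 0 ≤ (b - f x) / (b - a) := div_nonneg (by linarith [(hab x).2]) hba.le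
      have hw2 : 0 ≤ (f x - a) / (b - a) := div_nonneg (by linarith [(hab x).1]) hba.le
      have hsum : (b - f x) / (b - a) + (f x - a) / (b - a) = 1 := by
        field_simp
        ring
      have := convexOn_exp.2 (Set.mem_univ (t * a)) (Set.mem_univ (t * b)) hw1 hw2 hsum
      simp only [smul_eq_mul] at this
      have harg : (b - f x) / (b - a) * (t * a) + (f x - a) / (b - a) * (t * b) = t * f x := by
        field_simp
        ring
      rwa [harg] at this
    have hrhs : (fun x => (b - f x) / (b - a) * exp (t * a) + (f x - a) / (b - a) * exp (t * b))
        = fun x => (b / (b - a) * exp (t * a) + (-a) / (b - a) * exp (t * b))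
            + (exp (t * b) / (b - a) - exp (t * a) / (b - a)) * f x := by
      funext x
      field_simp
      ring
    have hIle : ∫ x, exp (t * f x) ∂ν
        ≤ b / (b - a) * exp (t * a) + (-a) / (b - a) * exp (t * b) := by
      have h1 : Integrable (fun x =>
          (b / (b - a) * exp (t * a) + (-a) / (b - a) * exp (t * b))
            + (exp (t * b) / (b - a) - exp (t * a) / (b - a)) * f x) ν :=
        (integrable_const _).add (hintf.const_mul _)
      have h2 := integral_mono hintexp h1
        (fun x => le_of_le_of_eq (hpt x) (congrFun hrhs x))
      rwa [integral_add (integrable_const _) (hintf.const_mul _), integral_const,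
        integral_const_mul, hmean, mul_zero, add_zero, probReal_univ,
        smul_eq_mul, one_mul] at h2
    refine hIle.trans ?_
    have := hoef_core (q := -a / (b - a)) (div_nonneg (by linarith) hba.le)
      (by rw [div_le_one hba]; linarith) (t * (b - a))
    have e1 : 1 - -a / (b - a) = b / (b - a) := by field_simp; ring
    have e2 : -(-a / (b - a)) * (t * (b - a)) = t * a := by field_simp
    have e3 : (1 - -a / (b - a)) * (t * (b - a)) = t * b := by
      rw [e1]; field_simp
    have e4 : (t * (b - a)) ^ 2 / 8 = t ^ 2 * (b - a) ^ 2 / 8 := by ring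
    rw [e2, e3, e4, e1] at this
    linarith

lemma chernoff {X : Type*} [MeasurableSpace X] (D : Measure X) [IsProbabilityMeasure D]
    {n : ℕ} (hn : 1 ≤ n) {f : X → ℝ} (hm : Measurable f) {G : ℝ} (hG : 0 < G)
    (hb : ∀ x, |f x| ≤ G) {ε : ℝ} (hε : 0 < ε) :
    (Measure.pi (fun _ : Fin n => D))
      {T | ε ≤ (n : ℝ)⁻¹ * ∑ j, (f (T j) - ∫ x, f x ∂D)}
      ≤ ENNReal.ofReal (exp (-(n : ℝ) * ε ^ 2 / (2 * G ^ 2))) := by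
  letI : MeasureSpace X := ⟨D⟩
  haveI : IsProbabilityMeasure (volume : Measure X) := ‹IsProbabilityMeasure D›
  set m : ℝ := ∫ x, f x ∂D with hm_def
  set Y : X → ℝ := fun x => f x - m with hY_def
  have hmY : Measurable Y := hm.sub measurable_const
  have hintf : Integrable f D := by
    refine (integrable_const G).mono' hm.aestronglyMeasurable ?_
    filter_upwards with x; simpa using hb x
  have hYmean : ∫ x, Y x ∂D = 0 := by
    rw [hY_def]
    rw [integral_sub hintf (integrable_const m), integral_const]
    simp [hm_def]
  have hmbound : |m| ≤ G := by
    calc |m| ≤ ∫ x, |f x| ∂D := by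
          rw [hm_def]; simpa using norm_integral_le_integral_norm (μ := D) f
      _ ≤ ∫ _ : X, G ∂D := integral_mono hintf.abs (integrable_const G) hb
      _ = G := by simp
  have hYab : ∀ x, Y x ∈ Set.Icc (-G - m) (G - m) := by
    intro x
    constructor
    · have := (abs_le.mp (hb x)).1; simp only [hY_def]; linarith
    · have := (abs_le.mp (hb x)).2; simp only [hY_def]; linarith
  set lam : ℝ := ε / G ^ 2 with hlam_def
  have hlam : 0 < lam := div_pos hε (by positivity)
  set Pi : Measure (Fin n → X) := Measure.pi (fun _ : Fin n => D) with hPi_def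
  haveI : IsProbabilityMeasure Pi := by
    rw [hPi_def]; infer_instance
  set Z : (Fin n → X) → ℝ := fun T => ∑ j, Y (T j) with hZ_def
  have hmZ : Measurable Z :=
    Finset.measurable_sum _ (fun j _ => hmY.comp (measurable_pi_apply j))
  have hZbound : ∀ T, |Z T| ≤ n * (2 * G) := by
    intro T
    calc |Z T| ≤ ∑ j, |Y (T j)| := Finset.abs_sum_le_sum_abs _ _
      _ ≤ ∑ _j : Fin n, 2 * G := by
          apply Finset.sum_le_sum
          intro j _
          have h1 := (hYab (T j)).1
          have h2 := (hYab (T j)).2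
          rw [abs_le]; constructor <;> nlinarith [abs_le.mp hmbound]
      _ = n * (2 * G) := by simp [mul_comm]
  have hintZ : Integrable (fun T => exp (lam * Z T)) Pi := by
    refine (integrable_const (exp (lam * (n * (2 * G))))).mono'
      ((hmZ.const_mul lam).exp.aestronglyMeasurable) ?_
    filter_upwards with T
    rw [norm_eq_abs, abs_exp]
    exact exp_le_exp.mpr (mul_le_mul_of_nonneg_left
      ((abs_le.mp (hZbound T)).2) hlam.le)
  have hset : {T : Fin n → X | ε ≤ (n : ℝ)⁻¹ * ∑ j, (f (T j) - m)}
      = {T | (n : ℝ) * ε ≤ Z T} := by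
    ext T
    simp only [Set.mem_setOf_eq, hZ_def, hY_def]
    have hn' : (0 : ℝ) < n := by exact_mod_cast hn
    rw [inv_mul_eq_div, le_div_iff₀ hn']
    constructor <;> intro h <;> linarith
  rw [hset]
  have hcher := ProbabilityTheory.measure_ge_le_exp_mul_mgf (μ := Pi) (X := Z)
    ((n : ℝ) * ε) hlam.le hintZ
  have hmgf : ProbabilityTheory.mgf Z Pi lam = (∫ x, exp (lam * Y x) ∂D) ^ n := by
    rw [ProbabilityTheory.mgf]
    have : (fun T : Fin n → X => exp (lam * Z T))
        = fun T => ∏ j, exp (lam * Y (T j)) := by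
      funext T
      rw [hZ_def]
      simp only []
      rw [Finset.mul_sum, exp_sum]
    rw [show (fun ω => exp (lam * Z ω)) = (fun T : Fin n → X => exp (lam * Z T)) from rfl, this]
    have hvol : Pi = (volume : Measure (Fin n → X)) := by
      rw [hPi_def, volume_pi]; rfl
    rw [hvol]
    simpa [← hvol, hPi_def] using integral_fintype_prod_eq_pow (ι := Fin n) (μ := D) (fun x => exp (lam * Y x))
  have hone : ∫ x, exp (lam * Y x) ∂D ≤ exp (lam ^ 2 * (2 * G) ^ 2 / 8) := by
    have := hoef_lemma D hmY hYab hYmean lam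
    convert this using 3
    ring
  have hnonneg : 0 ≤ ∫ x, exp (lam * Y x) ∂D :=
    integral_nonneg (fun x => (exp_pos _).le)
  have hmgfle : ProbabilityTheory.mgf Z Pi lam ≤ exp (lam ^ 2 * (2 * G) ^ 2 / 8) ^ n := by
    rw [hmgf]
    exact pow_le_pow_left₀ hnonneg hone n
  have hfinal : (Pi {T | (n : ℝ) * ε ≤ Z T}).toReal
      ≤ exp (-(n : ℝ) * ε ^ 2 / (2 * G ^ 2)) := by
    refine hcher.trans ?_
    calc exp (-lam * ((n : ℝ) * ε)) * ProbabilityTheory.mgf Z Pi lam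
        ≤ exp (-lam * ((n : ℝ) * ε)) * exp (lam ^ 2 * (2 * G) ^ 2 / 8) ^ n :=
          mul_le_mul_of_nonneg_left hmgfle (exp_pos _).le
      _ = exp (-lam * ((n : ℝ) * ε) + n * (lam ^ 2 * (2 * G) ^ 2 / 8)) := by
          rw [← exp_nat_mul, ← exp_add]
      _ = exp (-(n : ℝ) * ε ^ 2 / (2 * G ^ 2)) := by
          congr 1
          rw [hlam_def]
          field_simp
          ring
  rw [← ENNReal.ofReal_toReal (measure_ne_top Pi _)]
  exact ENNReal.ofReal_le_ofReal hfinal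

lemma coord_le_norm {p : ℕ} (x : Vec p) (i : Fin p) : |x i| ≤ ‖x‖ := by
  rw [EuclideanSpace.norm_eq]
  rw [← Real.sqrt_sq_eq_abs]
  apply Real.sqrt_le_sqrt
  have h : |x i| ^ 2 = ‖x i‖ ^ 2 := by rw [Real.norm_eq_abs]
  rw [sq_abs] at h
  rw [h]
  exact Finset.single_le_sum (f := fun j => ‖x j‖ ^ 2)
    (fun j _ => by positivity) (Finset.mem_univ i)

lemma spt_finite {p : ℕ} (w : Vec p) : (spt w).Finite := Set.toFinite _

lemma determin {p k : ℕ} (hk : 1 ≤ k) {μ : ℝ} (hμ : 0 < μ) (F : Vec p → ℝ)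
    (wt w : Vec p) (M : ℝ) (hM : ∀ i, |gradient F wt i| ≤ M)
    (hRSC : μ / 2 * ‖w - wt‖ ^ 2 ≤ F w - F wt - (inner ℝ (gradient F wt) (w - wt) : ℝ))
    (hFle : F w ≤ F wt)
    (hwt : (spt wt).ncard = k) (hw : (spt w).ncard ≤ k)
    (hsig : wmin wt > 2 * Real.sqrt (2 * k) / μ * M) :
    spt w = spt wt := by
  set d : Vec p := w - wt with hd_def
  by_cases hd0 : d = 0
  · have : w = wt := by
      have := sub_eq_zero.mp hd0
      exact this
    rw [this]
  have hsubd : spt d ⊆ spt w ∪ spt wt := by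
    intro i hi
    by_contra h
    simp only [Set.mem_union, spt, Set.mem_setOf_eq] at h hi
    push_neg at h
    apply hi
    show w i - wt i = 0
    rw [h.1, h.2, sub_zero]
  have hcardd : (spt d).ncard ≤ 2 * k := by
    calc (spt d).ncard ≤ (spt w ∪ spt wt).ncard :=
          Set.ncard_le_ncard hsubd ((spt_finite w).union (spt_finite wt))
      _ ≤ (spt w).ncard + (spt wt).ncard :=
          Set.ncard_union_le _ _
      _ ≤ 2 * k := by omega
  have hwtne : (spt wt).Nonempty := by
    apply Set.nonempty_of_ncard_ne_zero
    omega
  obtain ⟨i0, hi0⟩ := hwtne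
  have hM0 : 0 ≤ M := le_trans (abs_nonneg _) (hM i0)
  set gF := gradient F wt with hgF_def
  set s : Finset (Fin p) := (spt_finite d).toFinset with hs_def
  have hinner : (inner ℝ gF d : ℝ) = ∑ i ∈ s, gF i * d i := by
    rw [PiLp.inner_apply]
    simp only [RCLike.inner_apply, conj_trivial]
    rw [show (∑ x, d x * gF x) = ∑ x, gF x * d x from Finset.sum_congr rfl (fun x _ => mul_comm _ _)]
    symm
    apply Finset.sum_subset (Finset.subset_univ s)
    intro i _ hi
    have : d i = 0 := by
      by_contra h
      exact hi ((Set.Finite.mem_toFinset _).mpr h)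
    rw [this, mul_zero]
  have hcs : |(inner ℝ gF d : ℝ)| ≤ M * (Real.sqrt (2 * k) * ‖d‖) := by
    rw [hinner]
    calc |∑ i ∈ s, gF i * d i| ≤ ∑ i ∈ s, |gF i * d i| := Finset.abs_sum_le_sum_abs _ _
      _ ≤ ∑ i ∈ s, M * |d i| := by
          apply Finset.sum_le_sum
          intro i _
          rw [abs_mul]
          exact mul_le_mul_of_nonneg_right (hM i) (abs_nonneg _)
      _ = M * ∑ i ∈ s, |d i| := by rw [Finset.mul_sum]
      _ ≤ M * (Real.sqrt (2 * k) * ‖d‖) := by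
          apply mul_le_mul_of_nonneg_left _ hM0
          have hcs2 : (∑ i ∈ s, 1 * |d i|) ^ 2 ≤ (∑ _i ∈ s, (1:ℝ) ^ 2) * (∑ i ∈ s, |d i| ^ 2) :=
            Finset.sum_mul_sq_le_sq_mul_sq s 1 (fun i => |d i|)
          have h1 : (∑ _i ∈ s, (1:ℝ) ^ 2) = s.card := by simp
          have h2 : (∑ i ∈ s, |d i| ^ 2) ≤ ‖d‖ ^ 2 := by
            have : ‖d‖ ^ 2 = ∑ i, |d i| ^ 2 := by
              rw [EuclideanSpace.norm_eq, Real.sq_sqrt (by positivity)]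
              simp [Real.norm_eq_abs]
            rw [this]
            exact Finset.sum_le_sum_of_subset_of_nonneg (Finset.subset_univ s)
              (fun i _ _ => by positivity)
          have hcard : (s.card : ℝ) ≤ 2 * k := by
            have hsc : s.card = (spt d).ncard :=
              (Set.ncard_eq_toFinset_card _ (spt_finite d)).symm
            rw [hsc]
            exact_mod_cast hcardd
          have habs : ∑ i ∈ s, |d i| = abs (∑ i ∈ s, 1 * |d i|) := by
            simp only [one_mul]
            exact (abs_of_nonneg (Finset.sum_nonneg (fun i _ => abs_nonneg (d i)))).symm
          rw [habs, ← Real.sqrt_sq_eq_abs]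
          calc Real.sqrt ((∑ i ∈ s, 1 * |d i|) ^ 2)
              ≤ Real.sqrt ((2 * k) * ‖d‖ ^ 2) := by
                apply Real.sqrt_le_sqrt
                calc (∑ i ∈ s, 1 * |d i|) ^ 2 ≤ (∑ _i ∈ s, (1:ℝ) ^ 2) * (∑ i ∈ s, |d i| ^ 2) := hcs2
                  _ ≤ (2 * k) * ‖d‖ ^ 2 := by
                      apply mul_le_mul (h1 ▸ hcard) h2
                        (Finset.sum_nonneg (fun i _ => by positivity)) (by positivity)
            _ = Real.sqrt (2 * k) * ‖d‖ := by
                rw [Real.sqrt_mul (by positivity), Real.sqrt_sq (norm_nonneg d)]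
  have hdnorm : ‖d‖ ≤ 2 * Real.sqrt (2 * k) / μ * M := by
    have hdpos : 0 < ‖d‖ := norm_pos_iff.mpr hd0
    have h1 : μ / 2 * ‖d‖ ^ 2 ≤ M * (Real.sqrt (2 * k) * ‖d‖) := by
      have h2 : (inner ℝ gF d : ℝ) ≥ -(M * (Real.sqrt (2 * k) * ‖d‖)) := by
        have := (abs_le.mp hcs).1
        linarith
      calc μ / 2 * ‖d‖ ^ 2 ≤ F w - F wt - (inner ℝ gF d : ℝ) := hRSC
        _ ≤ -(inner ℝ gF d : ℝ) := by linarith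
        _ ≤ M * (Real.sqrt (2 * k) * ‖d‖) := by linarith
    have h2 : μ * ‖d‖ ≤ 2 * (M * Real.sqrt (2 * k)) := by nlinarith [h1, hdpos]
    rw [div_mul_eq_mul_div, le_div_iff₀ hμ]
    nlinarith
  have hlt : ‖d‖ < wmin wt := lt_of_le_of_lt hdnorm hsig
  have hsub : spt wt ⊆ spt w := by
    intro i hi
    by_contra h
    simp only [spt, Set.mem_setOf_eq, not_not] at h hi
    have hdi : |d i| = |wt i| := by
      show |w i - wt i| = |wt i|
      rw [h, zero_sub, abs_neg]
    have hwmin : wmin wt ≤ |wt i| := by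
      apply ciInf_le ⟨0, fun x hx => ?_⟩ (⟨i, hi⟩ : spt wt)
      obtain ⟨j, rfl⟩ := hx
      exact abs_nonneg _
    have : |d i| ≤ ‖d‖ := coord_le_norm d i
    linarith
  exact (Set.eq_of_subset_of_ncard_le hsub (by omega) (spt_finite w)).symm

lemma grad_inner {p : ℕ} (f : Vec p → ℝ) (x v : Vec p) :
    (inner ℝ (gradient f x) v : ℝ) = fderiv ℝ f x v := by
  rw [gradient]
  rw [← InnerProductSpace.toDual_apply_apply]
  rw [LinearIsometryEquiv.apply_symm_apply]

lemma grad_coord {p : ℕ} (f : Vec p → ℝ) (x : Vec p) (i : Fin p) :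
    gradient f x i = fderiv ℝ f x (EuclideanSpace.single i (1 : ℝ)) := by
  rw [← grad_inner]
  rw [EuclideanSpace.inner_single_right]
  simp

lemma fderiv_dir_meas {p : ℕ} {X : Type*} [MeasurableSpace X]
    (loss : Vec p → X → ℝ)
    (hmeas : Measurable fun q : Vec p × X => loss q.1 q.2)
    (hdiff : ∀ ξ, Differentiable ℝ fun w => loss w ξ)
    (wt v : Vec p) :
    Measurable (fun ξ => fderiv ℝ (fun w => loss w ξ) wt v) := by
  have hwm : ∀ w : Vec p, Measurable (fun ξ => loss w ξ) := fun w =>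
    hmeas.comp measurable_prodMk_left
  set q : ℕ → X → ℝ := fun j ξ =>
    (loss (wt + ((j : ℝ) + 1)⁻¹ • v) ξ - loss wt ξ) * ((j : ℝ) + 1) with hq_def
  have hqm : ∀ j, Measurable (q j) := fun j =>
    ((hwm _).sub (hwm _)).mul measurable_const
  apply measurable_of_tendsto_metrizable hqm
  rw [tendsto_pi_nhds]
  intro ξ
  have hline : HasDerivAt (fun t : ℝ => loss (wt + t • v) ξ)
      (fderiv ℝ (fun w => loss w ξ) wt v) 0 := by
    have h1 : HasFDerivAt (fun w => loss w ξ) (fderiv ℝ (fun w => loss w ξ) wt)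
        (wt + (0 : ℝ) • v) := by
      simpa using (hdiff ξ wt).hasFDerivAt
    have h2 : HasDerivAt (fun t : ℝ => wt + t • v) v 0 := by
      have : HasDerivAt (fun t : ℝ => t • v) v 0 := by
        simpa using (hasDerivAt_id (0:ℝ)).smul_const v
      simpa using this.const_add wt
    have h2' : HasDerivAt (fun t : ℝ => wt + t • v) v 0 := h2
    have := h1.comp_hasDerivAt 0 h2'
    exact this
  rw [hasDerivAt_iff_tendsto_slope] at hline
  have hseq : Filter.Tendsto (fun j : ℕ => ((j : ℝ) + 1)⁻¹) Filter.atTop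
      (nhdsWithin 0 {(0:ℝ)}ᶜ) := by
    rw [tendsto_nhdsWithin_iff]
    constructor
    · exact tendsto_one_div_add_atTop_nhds_zero_nat.congr (fun j => by
        rw [one_div])
    · filter_upwards with j
      simp only [Set.mem_compl_iff, Set.mem_singleton_iff]
      positivity
  have := hline.comp hseq
  apply this.congr
  intro j
  show slope (fun t : ℝ => loss (wt + t • v) ξ) 0 (((j : ℝ) + 1)⁻¹) = q j ξ
  rw [slope_def_field, hq_def]
  simp only [zero_smul, add_zero, sub_zero, div_eq_mul_inv, inv_inv]

lemma emp_grad_coord {p n : ℕ} {X : Type*} (loss : Vec p → X → ℝ)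
    (hdiff : ∀ ξ, Differentiable ℝ fun w => loss w ξ) (T : Fin n → X) (wt : Vec p) (i : Fin p) :
    gradient (emp loss T) wt i
      = (n : ℝ)⁻¹ * ∑ j, gradient (fun w => loss w (T j)) wt i := by
  rw [grad_coord]
  have hsum : HasFDerivAt (fun w => ∑ j, loss w (T j))
      (∑ j, fderiv ℝ (fun w => loss w (T j)) wt) wt :=
    HasFDerivAt.fun_sum (fun j _ => (hdiff (T j) wt).hasFDerivAt)
  have hF : HasFDerivAt (emp loss T)
      ((n : ℝ)⁻¹ • ∑ j, fderiv ℝ (fun w => loss w (T j)) wt) wt := hsum.const_mul _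
  rw [hF.fderiv]
  rw [ContinuousLinearMap.smul_apply, ContinuousLinearMap.sum_apply]
  rw [smul_eq_mul]
  congr 1
  apply Finset.sum_congr rfl
  intro j _
  rw [grad_coord]

end Aux

/-- Lemma B.5: under a strong-signal condition the ℓ0-ERM estimator
recovers the support of the underlying sparse vector with high probability. -/
theorem stmt13 {p k n : ℕ} (hp : 2 ≤ p) (hk : 1 ≤ k) (hn : 1 ≤ n)
    {G μ : ℝ} (hG : 0 < G) (hμ : 0 < μ)
    {X : Type*} [MeasurableSpace X] (D : Measure X) [IsProbabilityMeasure D]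
    (loss : Vec p → X → ℝ)
    (hmeas : Measurable fun q : Vec p × X => loss q.1 q.2)
    (hdiff : ∀ ξ, Differentiable ℝ fun w => loss w ξ)
    (hint : ∀ w, Integrable (loss w) D)
    (wt : Vec p)
    (hgradbound : ∀ ξ, ‖gradient (fun w => loss w ξ) wt‖ ≤ G)
    {Ω : Type*} [MeasurableSpace Ω] (P : Measure Ω) [IsProbabilityMeasure P]
    (S : Ω → Fin n → X) (hS : Measurable S)
    (hiid : Measure.map S P = Measure.pi fun _ : Fin n => D)
    {δn' : ℝ} (A : Set Ω) (hA : MeasurableSet A)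
    (hPA : ENNReal.ofReal (1 - δn') ≤ P A)
    (hRSC : ∀ ω ∈ A, RSC μ (2 * k) (emp loss (S ω)))
    (W : Set (Vec p)) (hwtW : wt ∈ W) (hwt : (spt wt).ncard = k)
    (wS : Ω → Vec p) (hwSmeas : Measurable wS)
    (hwS : ∀ ω, wS ω ∈ W ∧ (spt (wS ω)).ncard ≤ k ∧
      ∀ u ∈ W, (spt u).ncard ≤ k → emp loss (S ω) (wS ω) ≤ emp loss (S ω) u)
    {δ : ℝ} (hδ0 : 0 < δ) (hδ1 : δ < 1 - δn')
    (hsignal : wmin wt >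
      2 * Real.sqrt (2 * k) / μ *
        (linf (∫ ξ, gradient (fun w => loss w ξ) wt ∂D)
          + G * Real.sqrt (2 * Real.log (2 * p / δ) / n))) :
    ENNReal.ofReal (1 - δ - δn') ≤ P {ω | spt (wS ω) = spt wt} := by
  classical
  -- basic numeric facts
  have hδn'0 : 0 ≤ δn' := by
    by_contra h
    push_neg at h
    have h1 : (1 : ENNReal) < ENNReal.ofReal (1 - δn') := by
      rw [show (1 : ENNReal) = ENNReal.ofReal 1 by simp]
      exact (ENNReal.ofReal_lt_ofReal_iff (by linarith)).mpr (by linarith)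
    exact absurd (hPA.trans prob_le_one) (not_le.mpr h1)
  have hδ1' : δ < 1 := by linarith
  have hnpos : (0 : ℝ) < n := by exact_mod_cast hn
  have hppos : (0 : ℝ) < p := by positivity
  have hlog : 0 < Real.log (2 * p / δ) := by
    apply Real.log_pos
    rw [lt_div_iff₀ hδ0]
    have : (2 : ℝ) ≤ p := by exact_mod_cast hp
    nlinarith
  set t : ℝ := Real.sqrt (2 * Real.log (2 * p / δ) / n) with ht_def
  have ht : 0 < t := Real.sqrt_pos.mpr (by positivity)
  set ε : ℝ := G * t with hε_def
  have hε : 0 < ε := mul_pos hG ht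
  -- the gradient coordinate functions
  set grad : X → Vec p := fun ξ => gradient (fun w => loss w ξ) wt with hgrad_def
  set φ : Fin p → X → ℝ := fun i ξ => grad ξ i with hφ_def
  have hφeq : ∀ i, φ i
      = fun ξ => fderiv ℝ (fun w => loss w ξ) wt (EuclideanSpace.single i (1 : ℝ)) := by
    intro i; funext ξ; exact grad_coord _ _ _
  have hφmeas : ∀ i, Measurable (φ i) := fun i => by
    rw [hφeq i]
    exact fderiv_dir_meas loss hmeas hdiff wt _
  have hφbound : ∀ i ξ, |φ i ξ| ≤ G := fun i ξ =>
    (coord_le_norm (grad ξ) i).trans (hgradbound ξ)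
  have hgradmeas : Measurable grad :=
    (MeasurableEquiv.toLp 2 (Fin p → ℝ)).measurable.comp (measurable_pi_lambda _ hφmeas)
  have hgradint : Integrable grad D := by
    refine (integrable_const G).mono' hgradmeas.aestronglyMeasurable ?_
    filter_upwards with ξ
    exact hgradbound ξ
  set g : Vec p := ∫ ξ, grad ξ ∂D with hg_def
  have hgcoord : ∀ i, g i = ∫ ξ, φ i ξ ∂D := by
    intro i
    have := (EuclideanSpace.proj (𝕜 := ℝ) (ι := Fin p) i).integral_comp_comm hgradint
    exact this.symm
  have hgabs : ∀ i, |g i| ≤ linf g := by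
    intro i
    apply le_ciSup (f := fun i => |g i|)
    exact (Set.finite_range _).bddAbove
  -- bad events on the product space
  set Pi : Measure (Fin n → X) := Measure.pi (fun _ : Fin n => D) with hPi_def
  set Bp : Fin p → Set (Fin n → X) := fun i =>
    {T | ε ≤ (n : ℝ)⁻¹ * ∑ j, (φ i (T j) - ∫ ξ, φ i ξ ∂D)} with hBp_def
  set Bm : Fin p → Set (Fin n → X) := fun i =>
    {T | ε ≤ (n : ℝ)⁻¹ * ∑ j, ((fun ξ => -φ i ξ) (T j) - ∫ ξ, (fun ξ => -φ i ξ) ξ ∂D)}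
    with hBm_def
  have hexpval : Real.exp (-(n : ℝ) * ε ^ 2 / (2 * G ^ 2)) = δ / (2 * p) := by
    have ht2 : t ^ 2 = 2 * Real.log (2 * p / δ) / n := by
      rw [ht_def, Real.sq_sqrt (by positivity)]
    have harg : -(n : ℝ) * ε ^ 2 / (2 * G ^ 2) = -Real.log (2 * p / δ) := by
      rw [hε_def, mul_pow, ht2]
      field_simp
    rw [harg, Real.exp_neg, Real.exp_log (by positivity), inv_div]
  have hBple : ∀ i, Pi (Bp i) ≤ ENNReal.ofReal (δ / (2 * p)) := by
    intro i
    rw [hBp_def]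
    have := chernoff D hn (hφmeas i) hG (hφbound i) hε
    rwa [hexpval] at this
  have hBmle : ∀ i, Pi (Bm i) ≤ ENNReal.ofReal (δ / (2 * p)) := by
    intro i
    rw [hBm_def]
    have := chernoff D hn (hφmeas i).neg hG
      (fun x => by rw [show (-φ i) x = -φ i x from rfl, abs_neg]; exact hφbound i x) hε
    rwa [hexpval] at this
  set Bad : Set (Fin n → X) := ⋃ i, (Bp i ∪ Bm i) with hBad_def
  have havgmeas : ∀ i : Fin p, Measurable (fun T : Fin n → X =>
      (n : ℝ)⁻¹ * ∑ j, (φ i (T j) - ∫ ξ, φ i ξ ∂D)) := by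
    intro i
    apply Measurable.const_mul
    exact Finset.measurable_sum _ (fun j _ =>
      ((hφmeas i).comp (measurable_pi_apply j)).sub measurable_const)
  have hBpmeas : ∀ i, MeasurableSet (Bp i) := fun i =>
    measurableSet_le measurable_const (havgmeas i)
  have hBmmeas : ∀ i, MeasurableSet (Bm i) := by
    intro i
    apply measurableSet_le measurable_const
    apply Measurable.const_mul
    exact Finset.measurable_sum _ (fun j _ =>
      (((hφmeas i).neg).comp (measurable_pi_apply j)).sub measurable_const)
  have hBadmeas : MeasurableSet Bad :=
    MeasurableSet.iUnion (fun i => (hBpmeas i).union (hBmmeas i))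
  have hBadle : Pi Bad ≤ ENNReal.ofReal δ := by
    calc Pi Bad ≤ ∑' i : Fin p, Pi (Bp i ∪ Bm i) := measure_iUnion_le _
      _ = ∑ i : Fin p, Pi (Bp i ∪ Bm i) := tsum_fintype _
      _ ≤ ∑ _i : Fin p, ENNReal.ofReal (δ / p) := by
          apply Finset.sum_le_sum
          intro i _
          calc Pi (Bp i ∪ Bm i) ≤ Pi (Bp i) + Pi (Bm i) := measure_union_le _ _
            _ ≤ ENNReal.ofReal (δ / (2 * p)) + ENNReal.ofReal (δ / (2 * p)) :=
                add_le_add (hBple i) (hBmle i)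
            _ = ENNReal.ofReal (δ / p) := by
                rw [← ENNReal.ofReal_add (by positivity) (by positivity)]
                congr 1
                field_simp
                ring
      _ = (p : ENNReal) * ENNReal.ofReal (δ / p) := by
          rw [Finset.sum_const, Finset.card_univ, Fintype.card_fin, nsmul_eq_mul]
      _ = ENNReal.ofReal δ := by
          rw [← ENNReal.ofReal_natCast p, ← ENNReal.ofReal_mul (by positivity)]
          congr 1
          field_simp
  -- transfer to Ω
  have hPbad : P (S ⁻¹' Bad) ≤ ENNReal.ofReal δ := by
    rw [← Measure.map_apply hS hBadmeas, hiid]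
    exact hBadle
  -- on the good event the support is recovered
  have hincl : A ∩ (S ⁻¹' Bad)ᶜ ⊆ {ω | spt (wS ω) = spt wt} := by
    rintro ω ⟨hωA, hωG⟩
    have hTgood : ∀ i : Fin p, S ω ∉ Bp i ∧ S ω ∉ Bm i := by
      intro i
      constructor <;> intro h <;> exact hωG (Set.mem_iUnion.mpr ⟨i, by
        first
          | exact Set.mem_union_left _ h
          | exact Set.mem_union_right _ h⟩)
    set T : Fin n → X := S ω with hT_def
    set F : Vec p → ℝ := emp loss T with hF_def
    -- coordinates of the gradient of the empirical risk
    have hgradF : ∀ i, gradient F wt i = (n : ℝ)⁻¹ * ∑ j, φ i (T j) :=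
      fun i => emp_grad_coord loss hdiff T wt i
    -- deviation bounds
    have hdev : ∀ i, |(n : ℝ)⁻¹ * ∑ j, φ i (T j) - g i| ≤ ε := by
      intro i
      have havg : (n : ℝ)⁻¹ * ∑ j, (φ i (T j) - ∫ ξ, φ i ξ ∂D)
          = (n : ℝ)⁻¹ * ∑ j, φ i (T j) - g i := by
        rw [Finset.sum_sub_distrib, Finset.sum_const, Finset.card_univ, Fintype.card_fin,
          mul_sub, hgcoord i, nsmul_eq_mul]
        rw [← mul_assoc, inv_mul_cancel₀ (ne_of_gt hnpos), one_mul]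
      have h1 : ¬(ε ≤ (n : ℝ)⁻¹ * ∑ j, (φ i (T j) - ∫ ξ, φ i ξ ∂D)) := (hTgood i).1
      have h2 : ¬(ε ≤ (n : ℝ)⁻¹ * ∑ j, ((fun ξ => -φ i ξ) (T j)
          - ∫ ξ, (fun ξ => -φ i ξ) ξ ∂D)) := (hTgood i).2
      have havg2 : (n : ℝ)⁻¹ * ∑ j, ((fun ξ => -φ i ξ) (T j) - ∫ ξ, (fun ξ => -φ i ξ) ξ ∂D)
          = -((n : ℝ)⁻¹ * ∑ j, φ i (T j) - g i) := by
        have hinti : Integrable (φ i) D := by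
          refine (integrable_const G).mono' (hφmeas i).aestronglyMeasurable ?_
          filter_upwards with x; simpa using hφbound i x
        rw [integral_neg]
        rw [show (fun j : Fin n => -φ i (T j) - -∫ ξ, φ i ξ ∂D)
          = (fun j : Fin n => -(φ i (T j) - ∫ ξ, φ i ξ ∂D)) from funext (fun j => by ring)]
        rw [Finset.sum_neg_distrib, mul_neg, havg]
      rw [havg] at h1
      rw [havg2] at h2
      push_neg at h1 h2
      rw [abs_le]
      constructor <;> linarith
    -- bound on gradient coordinates
    have hM : ∀ i, |gradient F wt i| ≤ linf g + ε := by
      intro i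
      rw [hgradF i]
      calc |(n : ℝ)⁻¹ * ∑ j, φ i (T j)|
          ≤ |g i| + |(n : ℝ)⁻¹ * ∑ j, φ i (T j) - g i| := by
            have := abs_add_le (g i) ((n : ℝ)⁻¹ * ∑ j, φ i (T j) - g i)
            simpa using this
        _ ≤ linf g + ε := add_le_add (hgabs i) (hdev i)
    -- apply the deterministic lemma
    show spt (wS ω) = spt wt
    apply determin hk hμ F wt (wS ω) (linf g + ε) hM
    · exact hRSC ω hωA (wS ω) wt (by
        have := (hwS ω).2.1
        calc (spt (wS ω - wt)).ncard ≤ (spt (wS ω) ∪ spt wt).ncard := by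
              apply Set.ncard_le_ncard _ ((spt_finite _).union (spt_finite _))
              intro i hi
              by_contra hmem
              simp only [Set.mem_union, spt, Set.mem_setOf_eq] at hmem hi
              push_neg at hmem
              apply hi
              show wS ω i - wt i = 0
              rw [hmem.1, hmem.2, sub_zero]
          _ ≤ (spt (wS ω)).ncard + (spt wt).ncard := Set.ncard_union_le _ _
          _ ≤ 2 * k := by omega)
    · exact (hwS ω).2.2 wt hwtW (le_of_eq hwt)
    · exact hwt
    · exact (hwS ω).2.1
    · exact hsignal
  -- conclude
  refine le_trans ?_ (measure_mono hincl)
  have hsplit : P A ≤ P (A ∩ (S ⁻¹' Bad)ᶜ) + ENNReal.ofReal δ := by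
    refine (measure_le_inter_add_diff P A ((S ⁻¹' Bad)ᶜ)).trans ?_
    apply add_le_add_right
    refine le_trans (measure_mono ?_) hPbad
    intro ω hω
    simp only [Set.mem_diff, Set.mem_compl_iff, not_not] at hω
    exact hω.2
  have h1 : ENNReal.ofReal (1 - δn') ≤ P (A ∩ (S ⁻¹' Bad)ᶜ) + ENNReal.ofReal δ :=
    hPA.trans hsplit
  have h2 : ENNReal.ofReal (1 - δ - δn')
      = ENNReal.ofReal (1 - δn') - ENNReal.ofReal δ := by
    rw [← ENNReal.ofReal_sub _ hδ0.le]
    ring_nf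
  rw [h2]
  exact tsub_le_iff_right.mpr h1
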